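/- arXiv:2201.02439 — 5 statements merged into one kernel-verified Lean document; each statement's English description precedes it below -/
import Mathlib

section
/- Let A, B be bounded selfadjoint operators on a complex Hilbert space H with B indefinite, and assume ⟨Ax, x⟩ ≥ 0 for every x ∈ Q(B). Then for every y ∈ H with ⟨By, y⟩ < 0 and every z ∈ H with ⟨Bz, z⟩ > 0 one has ⟨Ay, y⟩/⟨By, y⟩ ≤ ⟨Az, z⟩/⟨Bz, z⟩. -/
open scoped InnerProductSpace

noncomputable section

variable {H : Type*} [NormedAddCommGroup H] [InnerProductSpace ℂ H] [CompleteSpace H]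

/-- The (real) quadratic form associated to an operator. -/
def qf (T : H →L[ℂ] H) (x : H) : ℝ := (⟪T x, x⟫_ℂ).re

/-- Positive semidefinite operator. -/
def PosSemidef (T : H →L[ℂ] H) : Prop := ∀ x, 0 ≤ qf T x

/-- Positive definite operator (uniformly positive). -/
def PosDef (T : H →L[ℂ] H) : Prop := ∃ α > 0, ∀ x, α * ‖x‖ ^ 2 ≤ qf T x

/-- The set of parameters where the pencil `A + ρ B` is positive semidefinite. -/
def Ige (A B : H →L[ℂ] H) : Set ℝ := {ρ | PosSemidef (A + (ρ : ℂ) • B)}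

/-- The set of parameters where the pencil `A + ρ B` is positive definite. -/
def Igt (A B : H →L[ℂ] H) : Set ℝ := {ρ | PosDef (A + (ρ : ℂ) • B)}

/-- An operator is indefinite if its quadratic form takes both signs. -/
def Indefinite (T : H →L[ℂ] H) : Prop := (∃ x, 0 < qf T x) ∧ (∃ x, qf T x < 0)

/-!
Given `⟪By, y⟫ < 0 < ⟪Bz, z⟫`, choose `μ ∈ ℂ` with `‖μ‖² = -⟪Bz, z⟫ / ⟪By, y⟫` and with the phase
that makes the cross term of `⟪B(z + μy), z + μy⟫` vanish. Then `z + μy` and `z - μy` are both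
neutral for `B`, so `⟪A(z ± μy), z ± μy⟫ ≥ 0`; adding the two inequalities cancels the cross terms
of `A` and gives `⟪Az, z⟫ + ‖μ‖² ⟪Ay, y⟫ ≥ 0`, which is the claimed inequality of ratios.
-/

section QuadraticForm

variable {E : Type*} [NormedAddCommGroup E] [InnerProductSpace ℂ E]

lemma qf_smul (T : E →L[ℂ] E) (μ : ℂ) (x : E) : qf T (μ • x) = ‖μ‖ ^ 2 * qf T x := by
  rw [qf, map_smul, inner_smul_left, inner_smul_right, ← mul_assoc, Complex.conj_mul',
    ← Complex.ofReal_pow, Complex.re_ofReal_mul, qf]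

lemma qf_add_smul (T : E →L[ℂ] E) (x y : E) (μ : ℂ) :
    qf T (x + μ • y) =
      qf T x + ‖μ‖ ^ 2 * qf T y + (μ * (⟪T x, y⟫_ℂ + starRingEnd ℂ ⟪T y, x⟫_ℂ)).re := by
  rw [← qf_smul]
  simp only [qf, map_add, map_smul, inner_add_left, inner_add_right, inner_smul_left,
    inner_smul_right, Complex.add_re, mul_add]
  have : (starRingEnd ℂ μ * ⟪T y, x⟫_ℂ).re = (μ * starRingEnd ℂ ⟪T y, x⟫_ℂ).re := by
    rw [← Complex.conj_re, map_mul, Complex.conj_conj]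
  rw [this]
  ring

lemma Complex.exists_norm_eq_one_re_mul_eq_zero (w : ℂ) :
    ∃ c : ℂ, ‖c‖ = 1 ∧ (c * w).re = 0 := by
  set u := Complex.exp (w.arg * Complex.I)
  have hu : ‖u‖ = 1 := Complex.norm_exp_ofReal_mul_I _
  refine ⟨Complex.I * (starRingEnd ℂ) u, by simp [hu], ?_⟩
  have huu : starRingEnd ℂ u * u = 1 := by rw [Complex.conj_mul', hu]; simp
  rw [← Complex.norm_mul_exp_arg_mul_I w]
  calc (Complex.I * starRingEnd ℂ u * (‖w‖ * u)).re
      = (Complex.I * ‖w‖ * (starRingEnd ℂ u * u)).re := by ring_nf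
    _ = 0 := by simp [huu]

lemma exists_qf_add_smul_eq_zero_and_qf_add_neg_smul_eq_zero (T : E →L[ℂ] E) {y z : E}
    (hy : qf T y < 0) (hz : 0 < qf T z) :
    ∃ μ : ℂ, ‖μ‖ ^ 2 * -qf T y = qf T z ∧
      qf T (z + μ • y) = 0 ∧ qf T (z + (-μ) • y) = 0 := by
  obtain ⟨c, hc, hcγ⟩ :=
    Complex.exists_norm_eq_one_re_mul_eq_zero (⟪T z, y⟫_ℂ + starRingEnd ℂ ⟪T y, z⟫_ℂ)
  set t := Real.sqrt (qf T z / -qf T y)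
  have ht : t ^ 2 * -qf T y = qf T z := by
    rw [Real.sq_sqrt (div_pos hz (neg_pos.2 hy)).le, div_mul_cancel₀ _ (neg_pos.2 hy).ne']
  have hμ : ‖(t : ℂ) * c‖ ^ 2 = t ^ 2 := by
    rw [norm_mul, hc, mul_one, Complex.norm_real, Real.norm_eq_abs, sq_abs]
  refine ⟨t * c, by rw [hμ, ht], ?_, ?_⟩
  · rw [qf_add_smul, hμ, mul_assoc, Complex.re_ofReal_mul, hcγ]
    linarith
  · rw [qf_add_smul, norm_neg, hμ, neg_mul, mul_assoc, Complex.neg_re, Complex.re_ofReal_mul,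
      hcγ]
    linarith

end QuadraticForm

theorem stmt0_general (A B : H →L[ℂ] H) (hQ : ∀ x, qf B x = 0 → 0 ≤ qf A x) :
    ∀ y z : H, qf B y < 0 → 0 < qf B z →
      qf A y / qf B y ≤ qf A z / qf B z := by
  intro y z hy hz
  obtain ⟨μ, hμ, hplus, hminus⟩ :=
    exists_qf_add_smul_eq_zero_and_qf_add_neg_smul_eq_zero B hy hz
  have hsum : 0 ≤ qf A (z + μ • y) + qf A (z + (-μ) • y) :=
    add_nonneg (hQ _ hplus) (hQ _ hminus)
  -- the cross terms of the two expansions cancel, leaving `0 ≤ 2 (qf A z + ‖μ‖² qf A y)`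
  rw [qf_add_smul, qf_add_smul, norm_neg, neg_mul, Complex.neg_re] at hsum
  rw [← neg_div_neg_eq (qf A y), div_le_div_iff₀ (neg_pos.2 hy) hz, ← hμ]
  nlinarith [neg_pos.2 hy]

theorem stmt0 (A B : H →L[ℂ] H) (hA : IsSelfAdjoint A) (hB : IsSelfAdjoint B)
    (hBind : Indefinite B) (hQ : ∀ x, qf B x = 0 → 0 ≤ qf A x) :
    ∀ y z : H, qf B y < 0 → 0 < qf B z →
      qf A y / qf B y ≤ qf A z / qf B z :=
  stmt0_general A B hQ
end
end

section
/- Let A, B be bounded selfadjoint operators on a complex Hilbert space H with B indefinite, and assume ⟨Ax, x⟩ ≥ 0 for every x ∈ Q(B). Then λ₋ ≤ λ₊ and I_≥(A,B) equals the closed interval [λ₋, λ₊]. -/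
/-!
If some `B`-negative ratio `qf A y / qf B y` exceeded some `B`-positive ratio `qf A x / qf B x`,
then for `c` strictly between them the form of `C = A - c • B` would be negative at both `x` and
`y`. Multiplying `y` by a unimodular scalar removes the cross term of `qf B` along `x + t • y`
while making that of `qf C` nonpositive, and `t = √(qf B x / -qf B y)` then makes `x + t • y`
neutral for `B`; there `qf A = qf C < 0`, contradicting the hypothesis on `Q(B)`. So every
negative ratio lies below every positive ratio, and `A + ρ • B` is positive semidefinite exactly
when `-ρ` separates the two sets of ratios.
-/

open scoped InnerProductSpace

noncomputable section

variable {H : Type*} [NormedAddCommGroup H] [InnerProductSpace ℂ H] [CompleteSpace H]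

namespace Complex

lemma exists_norm_eq_one_re_mul_eq_zero_s4 (β : ℂ) : ∃ u : ℂ, ‖u‖ = 1 ∧ (u * β).re = 0 := by
  refine ⟨exp (↑(Real.pi / 2 - β.arg) * I), norm_exp_ofReal_mul_I _, ?_⟩
  have h : exp (↑(Real.pi / 2 - β.arg) * I) * β = ‖β‖ * I := by
    calc _ = ‖β‖ * exp (↑(Real.pi / 2 - β.arg) * I + β.arg * I) := by
          nth_rw 2 [← norm_mul_exp_arg_mul_I β]
          rw [exp_add]
          ring
      _ = ‖β‖ * exp (Real.pi / 2 * I) := by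
          congr 2
          push_cast
          ring
      _ = ‖β‖ * I := by rw [exp_pi_div_two_mul_I]
  rw [h]; simp

lemma exists_norm_eq_one_re_mul_eq_zero_re_mul_nonpos (β γ : ℂ) :
    ∃ w : ℂ, ‖w‖ = 1 ∧ (w * β).re = 0 ∧ (w * γ).re ≤ 0 := by
  obtain ⟨u, hu, huβ⟩ := exists_norm_eq_one_re_mul_eq_zero_s4 β
  rcases le_or_gt (u * γ).re 0 with h | h
  · exact ⟨u, hu, huβ, h⟩
  · exact ⟨-u, by rwa [norm_neg], by rw [neg_mul, neg_re, huβ, neg_zero],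
      by rw [neg_mul, neg_re]; linarith⟩

end Complex

section

variable {E : Type*} [NormedAddCommGroup E] [InnerProductSpace ℂ E]

lemma qf_add_ofReal_smul (A B : E →L[ℂ] E) (μ : ℝ) (x : E) :
    qf (A + (μ : ℂ) • B) x = qf A x + μ * qf B x := by
  simp [qf]

lemma qf_apply_add_smul (T : E →L[ℂ] E) (x y : E) (c : ℂ) :
    qf T (x + c • y) = qf T x + ‖c‖ ^ 2 * qf T y + (c * (⟪T x, y⟫_ℂ + ⟪x, T y⟫_ℂ)).re := by
  have hconj : (starRingEnd ℂ c * ⟪T y, x⟫_ℂ).re = (c * ⟪x, T y⟫_ℂ).re := by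
    rw [← inner_conj_symm, ← map_mul, Complex.conj_re]
  have hnorm : (c * starRingEnd ℂ c * ⟪T y, y⟫_ℂ).re = ‖c‖ ^ 2 * (⟪T y, y⟫_ℂ).re := by
    rw [Complex.mul_conj, Complex.normSq_eq_norm_sq, Complex.re_ofReal_mul]
  simp only [qf, map_add, map_smul, inner_add_left, inner_add_right, inner_smul_left,
    inner_smul_right, Complex.add_re, mul_add]
  rw [← hconj, ← hnorm, ← mul_assoc]
  ring

lemma exists_qf_eq_zero_qf_neg {B C : E →L[ℂ] E} {x y : E} (hBx : 0 < qf B x) (hBy : qf B y < 0)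
    (hCx : qf C x < 0) (hCy : qf C y < 0) : ∃ z, qf B z = 0 ∧ qf C z < 0 := by
  obtain ⟨w, hw, hwB, hwC⟩ := Complex.exists_norm_eq_one_re_mul_eq_zero_re_mul_nonpos
    (⟪B x, y⟫_ℂ + ⟪x, B y⟫_ℂ) (⟪C x, y⟫_ℂ + ⟪x, C y⟫_ℂ)
  set s := √(qf B x / -qf B y)
  have hs : s ^ 2 = qf B x / -qf B y := Real.sq_sqrt (div_nonneg hBx.le (neg_nonneg.2 hBy.le))
  have hc : ‖(s : ℂ) * w‖ ^ 2 = s ^ 2 := by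
    rw [norm_mul, hw, mul_one, Complex.norm_real, Real.norm_eq_abs, sq_abs]
  refine ⟨x + ((s : ℂ) * w) • y, ?_, ?_⟩
  · rw [qf_apply_add_smul, hc, mul_assoc, Complex.re_ofReal_mul, hwB, hs, div_neg, neg_mul,
      div_mul_cancel₀ _ hBy.ne]
    ring
  · rw [qf_apply_add_smul, hc, mul_assoc, Complex.re_ofReal_mul]
    have : s ^ 2 * qf C y ≤ 0 := mul_nonpos_of_nonneg_of_nonpos (sq_nonneg s) hCy.le
    have : s * (w * (⟪C x, y⟫_ℂ + ⟪x, C y⟫_ℂ)).re ≤ 0 :=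
      mul_nonpos_of_nonneg_of_nonpos (Real.sqrt_nonneg _) hwC
    linarith

variable {A B : E →L[ℂ] E}

def posRatios (A B : E →L[ℂ] E) : Set ℝ := {r | ∃ x, 0 < qf B x ∧ r = qf A x / qf B x}

def negRatios (A B : E →L[ℂ] E) : Set ℝ := {r | ∃ x, qf B x < 0 ∧ r = qf A x / qf B x}

lemma le_of_mem_negRatios_of_mem_posRatios (hQ : ∀ z, qf B z = 0 → 0 ≤ qf A z) :
    ∀ a ∈ negRatios A B, ∀ b ∈ posRatios A B, a ≤ b := by
  rintro _ ⟨y, hy, rfl⟩ _ ⟨x, hx, rfl⟩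
  by_contra! h
  obtain ⟨c, hxc, hcy⟩ := exists_between h
  rw [div_lt_iff₀ hx] at hxc
  rw [lt_div_iff_of_neg hy] at hcy
  have hCx : qf (A + ((-c : ℝ) : ℂ) • B) x < 0 := by rw [qf_add_ofReal_smul]; linarith
  have hCy : qf (A + ((-c : ℝ) : ℂ) • B) y < 0 := by rw [qf_add_ofReal_smul]; linarith
  obtain ⟨z, hBz, hCz⟩ := exists_qf_eq_zero_qf_neg hx hy hCx hCy
  rw [qf_add_ofReal_smul, hBz, mul_zero, add_zero] at hCz
  exact (hQ z hBz).not_gt hCz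

lemma mem_Ige_iff_forall_ratios (hQ : ∀ z, qf B z = 0 → 0 ≤ qf A z) (ρ : ℝ) :
    ρ ∈ Ige A B ↔ (∀ r ∈ posRatios A B, -ρ ≤ r) ∧ (∀ r ∈ negRatios A B, r ≤ -ρ) := by
  change (∀ x, 0 ≤ qf (A + (ρ : ℂ) • B) x) ↔ _
  simp only [qf_add_ofReal_smul]
  constructor
  · intro h
    constructor
    · rintro _ ⟨x, hx, rfl⟩
      rw [le_div_iff₀ hx]
      linarith [h x]
    · rintro _ ⟨y, hy, rfl⟩
      rw [div_le_iff_of_neg hy]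
      linarith [h y]
  · rintro ⟨hpos, hneg⟩ x
    rcases lt_trichotomy (qf B x) 0 with hx | hx | hx
    · have := hneg _ ⟨x, hx, rfl⟩
      rw [div_le_iff_of_neg hx] at this
      linarith
    · rw [hx, mul_zero, add_zero]
      exact hQ x hx
    · have := hpos _ ⟨x, hx, rfl⟩
      rw [le_div_iff₀ hx] at this
      linarith

end

theorem stmt4_general (A B : H →L[ℂ] H)
    (hBind : Indefinite B) (hQ : ∀ x, qf B x = 0 → 0 ≤ qf A x)
    (lm lp : ℝ)
    (hlm : lm = -sInf {r : ℝ | ∃ x : H, 0 < qf B x ∧ r = qf A x / qf B x})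
    (hlp : lp = -sSup {r : ℝ | ∃ x : H, qf B x < 0 ∧ r = qf A x / qf B x}) :
    lm ≤ lp ∧ Ige A B = Set.Icc lm lp := by
  change lm = -sInf (posRatios A B) at hlm
  change lp = -sSup (negRatios A B) at hlp
  subst hlm hlp
  obtain ⟨⟨xp, hxp⟩, ⟨xm, hxm⟩⟩ := hBind
  have hP : (posRatios A B).Nonempty := ⟨_, xp, hxp, rfl⟩
  have hN : (negRatios A B).Nonempty := ⟨_, xm, hxm, rfl⟩
  have hle := le_of_mem_negRatios_of_mem_posRatios hQ
  have hPbdd : BddBelow (posRatios A B) := ⟨_, hle _ hN.some_mem⟩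
  have hNbdd : BddAbove (negRatios A B) := ⟨_, fun a ha => hle a ha _ hP.some_mem⟩
  refine ⟨neg_le_neg (csSup_le hN fun a ha => le_csInf hP (hle a ha)), ?_⟩
  ext ρ
  rw [mem_Ige_iff_forall_ratios hQ, Set.mem_Icc, neg_le, le_neg, le_csInf_iff hPbdd hP,
    csSup_le_iff hNbdd hN]

theorem stmt4 (A B : H →L[ℂ] H) (hA : IsSelfAdjoint A) (hB : IsSelfAdjoint B)
    (hBind : Indefinite B) (hQ : ∀ x, qf B x = 0 → 0 ≤ qf A x)
    (lm lp : ℝ)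
    (hlm : lm = -sInf {r : ℝ | ∃ x : H, 0 < qf B x ∧ r = qf A x / qf B x})
    (hlp : lp = -sSup {r : ℝ | ∃ x : H, qf B x < 0 ∧ r = qf A x / qf B x}) :
    lm ≤ lp ∧ Ige A B = Set.Icc lm lp :=
  stmt4_general A B hBind hQ lm lp hlm hlp
end
end

section
/- Let A, B be bounded selfadjoint operators on a complex Hilbert space H and assume I_≥(A,B) = [λ₋, λ₊] with λ₋ < λ₊. Then for all λ, λ' with λ₋ < λ < λ' < λ₊ and every x in the orthogonal complement of ker A ∩ ker B one has ((λ₊ − λ')/(λ₊ − λ)) · ⟨(A+λB)x, x⟩ ≤ ⟨(A+λ'B)x, x⟩ ≤ ((λ' − λ₋)/(λ − λ₋)) · ⟨(A+λB)x, x⟩; in particular the seminorms ‖x‖_λ = ⟨(A+λB)x,x⟩^{1/2} and ‖x‖_{λ'} are equivalent norms on (ker A ∩ ker B)^⊥. -/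
/-! The quadratic form `ρ ↦ ⟨(A + ρB)x, x⟩` is affine in `ρ` and, since `λ₋, λ₊ ∈ I_≥(A,B)`, nonnegative
at both endpoints. Writing its value at `λ'` as a convex combination of its values at `λ` and `λ₊`
(resp. its value at `λ` as one of its values at `λ₋` and `λ'`) gives the two bounds. -/

open scoped InnerProductSpace

noncomputable section

variable {H : Type*} [NormedAddCommGroup H] [InnerProductSpace ℂ H] [CompleteSpace H]

section

variable {E : Type*} [NormedAddCommGroup E] [InnerProductSpace ℂ E]

lemma qf_add_real_smul (A B : E →L[ℂ] E) (ρ : ℝ) (x : E) :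
    qf (A + (ρ : ℂ) • B) x = qf A x + ρ * qf B x := by
  simp only [qf, add_apply, FunLike.coe_smul,
    Pi.smul_apply, inner_add_left, inner_smul_left, Complex.conj_ofReal, Complex.add_re,
    Complex.mul_re, Complex.ofReal_re, Complex.ofReal_im]
  ring

lemma qf_nonneg_of_mem_Ige {A B : E →L[ℂ] E} {ρ : ℝ} (hρ : ρ ∈ Ige A B) (x : E) :
    0 ≤ qf A x + ρ * qf B x :=
  qf_add_real_smul A B ρ x ▸ hρ x

end

lemma div_mul_affine_le_of_nonneg_right {a b l l' r : ℝ} (hr : 0 ≤ a + r * b)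
    (hll' : l ≤ l') (hlr : l < r) :
    (r - l') / (r - l) * (a + l * b) ≤ a + l' * b := by
  rw [div_mul_eq_mul_div, div_le_iff₀ (sub_pos.2 hlr)]
  nlinarith [mul_nonneg (sub_nonneg.2 hll') hr]

lemma affine_le_div_mul_of_nonneg_left {a b l l' r : ℝ} (hr : 0 ≤ a + r * b)
    (hrl : r < l) (hll' : l ≤ l') :
    a + l' * b ≤ (l' - r) / (l - r) * (a + l * b) := by
  rw [div_mul_eq_mul_div, le_div_iff₀ (sub_pos.2 hrl)]
  nlinarith [mul_nonneg (sub_nonneg.2 hll') hr]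

theorem stmt8_general (A B : H →L[ℂ] H)
    (lm lp : ℝ) (hI : Ige A B = Set.Icc lm lp) :
    ∀ l l' : ℝ, lm < l → l < l' → l' < lp →
      ∀ x ∈ (LinearMap.ker (A : H →ₗ[ℂ] H) ⊓ LinearMap.ker (B : H →ₗ[ℂ] H))ᗮ,
        ((lp - l') / (lp - l)) * qf (A + (l : ℂ) • B) x ≤ qf (A + (l' : ℂ) • B) x ∧
        qf (A + (l' : ℂ) • B) x ≤ ((l' - lm) / (l - lm)) * qf (A + (l : ℂ) • B) x := by
  intro l l' hlm hll' hlp x _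
  have hle : lm ≤ lp := by linarith
  have hm : lm ∈ Ige A B := hI ▸ Set.left_mem_Icc.2 hle
  have hp : lp ∈ Ige A B := hI ▸ Set.right_mem_Icc.2 hle
  rw [qf_add_real_smul, qf_add_real_smul]
  exact ⟨div_mul_affine_le_of_nonneg_right (qf_nonneg_of_mem_Ige hp x) hll'.le (hll'.trans hlp),
    affine_le_div_mul_of_nonneg_left (qf_nonneg_of_mem_Ige hm x) hlm hll'.le⟩

theorem stmt8 (A B : H →L[ℂ] H) (hA : IsSelfAdjoint A) (hB : IsSelfAdjoint B)
    (lm lp : ℝ) (hlt : lm < lp) (hI : Ige A B = Set.Icc lm lp) :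
    ∀ l l' : ℝ, lm < l → l < l' → l' < lp →
      ∀ x ∈ (LinearMap.ker (A : H →ₗ[ℂ] H) ⊓ LinearMap.ker (B : H →ₗ[ℂ] H))ᗮ,
        ((lp - l') / (lp - l)) * qf (A + (l : ℂ) • B) x ≤ qf (A + (l' : ℂ) • B) x ∧
        qf (A + (l' : ℂ) • B) x ≤ ((l' - lm) / (l - lm)) * qf (A + (l : ℂ) • B) x :=
  stmt8_general A B lm lp hI
end
end

section
/- Let A, B be bounded selfadjoint operators on a complex Hilbert space H and assume I_≥(A,B) = [λ₋, λ₊] with λ₋ < λ₊. Then for every λ ∈ (λ₋, λ₊) and every x in the orthogonal complement of ker A ∩ ker B one has ⟨(A+λ₋B)x, x⟩ ≤ ((λ₊ − λ₋)/(λ₊ − λ)) · ⟨(A+λB)x, x⟩ and ⟨(A+λ₊B)x, x⟩ ≤ ((λ₊ − λ₋)/(λ − λ₋)) · ⟨(A+λB)x, x⟩. -/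
open scoped InnerProductSpace

noncomputable section

variable {H : Type*} [NormedAddCommGroup H] [InnerProductSpace ℂ H] [CompleteSpace H]

/-!
The quadratic form of the pencil is affine in the parameter, so for `lm < l < lp`
`(lp - lm) qf(A + l B) = (lp - l) qf(A + lm B) + (l - lm) qf(A + lp B)`.
Both terms on the right are nonnegative because `lm, lp ∈ I_≥(A, B)`; dropping either one
gives the two bounds.
-/

omit [CompleteSpace H] in
lemma qf_add_ofReal_smul_s9 (T S : H →L[ℂ] H) (c : ℝ) (x : H) :
    qf (T + (c : ℂ) • S) x = qf T x + c * qf S x := by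
  simp [qf]

omit [CompleteSpace H] in
lemma qf_pencil_interpolation (A B : H →L[ℂ] H) (lm l lp : ℝ) (x : H) :
    (lp - lm) * qf (A + (l : ℂ) • B) x =
      (lp - l) * qf (A + (lm : ℂ) • B) x + (l - lm) * qf (A + (lp : ℂ) • B) x := by
  simp only [qf_add_ofReal_smul_s9]
  ring

lemma le_div_mul_of_eq_mul_add {c q s u w : ℝ} (hs : 0 < s) (hw : 0 ≤ w)
    (h : c * q = s * u + w) : u ≤ c / s * q := by
  rw [div_mul_eq_mul_div, le_div_iff₀ hs]
  linarith

theorem stmt9_general (A B : H →L[ℂ] H)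
    (lm lp : ℝ) (hI : Ige A B = Set.Icc lm lp) :
    ∀ l ∈ Set.Ioo lm lp, ∀ x ∈ (LinearMap.ker (A : H →ₗ[ℂ] H) ⊓ LinearMap.ker (B : H →ₗ[ℂ] H))ᗮ,
      qf (A + (lm : ℂ) • B) x ≤ ((lp - lm) / (lp - l)) * qf (A + (l : ℂ) • B) x ∧
      qf (A + (lp : ℂ) • B) x ≤ ((lp - lm) / (l - lm)) * qf (A + (l : ℂ) • B) x := by
  rintro l ⟨hlm, hlp⟩ x -
  have hm : lm ∈ Ige A B := hI ▸ ⟨le_rfl, by linarith⟩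
  have hp : lp ∈ Ige A B := hI ▸ ⟨by linarith, le_rfl⟩
  have hinterp := qf_pencil_interpolation A B lm l lp x
  constructor
  · exact le_div_mul_of_eq_mul_add (sub_pos.2 hlp)
      (mul_nonneg (sub_nonneg.2 hlm.le) (hp x)) hinterp
  · exact le_div_mul_of_eq_mul_add (sub_pos.2 hlm)
      (mul_nonneg (sub_nonneg.2 hlp.le) (hm x)) (by rw [hinterp]; ring)

theorem stmt9 (A B : H →L[ℂ] H) (hA : IsSelfAdjoint A) (hB : IsSelfAdjoint B)
    (lm lp : ℝ) (hlt : lm < lp) (hI : Ige A B = Set.Icc lm lp) :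
    ∀ l ∈ Set.Ioo lm lp, ∀ x ∈ (LinearMap.ker (A : H →ₗ[ℂ] H) ⊓ LinearMap.ker (B : H →ₗ[ℂ] H))ᗮ,
      qf (A + (lm : ℂ) • B) x ≤ ((lp - lm) / (lp - l)) * qf (A + (l : ℂ) • B) x ∧
      qf (A + (lp : ℂ) • B) x ≤ ((lp - lm) / (l - lm)) * qf (A + (l : ℂ) • B) x :=
  stmt9_general A B lm lp hI
end
end

section
/- Let A, B be bounded selfadjoint operators on a complex Hilbert space H with B indefinite, and assume I_≥(A,B) = [λ₋, λ₊] with λ₋ < λ₊. Then for all λ, λ' ∈ (λ₋, λ₊), the range of the positive square root (A + λB)^{1/2} equals the range of (A + λ'B)^{1/2}. -/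
open scoped InnerProductSpace

noncomputable section

variable {H : Type*} [NormedAddCommGroup H] [InnerProductSpace ℂ H] [CompleteSpace H]

/-!
For `0 ≤ S` one has `‖√S x‖² = ⟪S x, x⟫`, so a form inequality `S ≤ c T` gives
`‖√S x‖ ≤ √c ‖√T x‖`, and Douglas' lemma turns this into `range √S ⊆ range √T`.
Along the pencil, `μ ↦ ⟪(A + μB) x, x⟫` is affine and nonnegative at `λ₋` and `λ₊`, so for an
interior `λ'` it dominates the form at any `λ ∈ [λ₋, λ₊]` up to a constant independent of `x`;
exchanging `λ` and `λ'` gives equality of the ranges.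
-/

section Douglas

variable {𝕜 E F G : Type*} [RCLike 𝕜]
  [NormedAddCommGroup E] [InnerProductSpace 𝕜 E] [CompleteSpace E]
  [NormedAddCommGroup F] [InnerProductSpace 𝕜 F] [CompleteSpace F]
  [NormedAddCommGroup G] [InnerProductSpace 𝕜 G] [CompleteSpace G]

/-- Douglas' lemma: `x ↦ ⟪z, S x⟫` factors boundedly through `T`, and the Riesz representative
of a Hahn–Banach extension of the factor is a `T†`-preimage of `S† z`. -/
theorem range_adjoint_le_of_norm_apply_le (S : E →L[𝕜] G) (T : E →L[𝕜] F) (c : ℝ)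
    (h : ∀ x, ‖S x‖ ≤ c * ‖T x‖) :
    LinearMap.range (S.adjoint : G →ₗ[𝕜] E) ≤ LinearMap.range (T.adjoint : F →ₗ[𝕜] E) := by
  rintro _ ⟨z, rfl⟩
  let f : E →ₗ[𝕜] 𝕜 := (innerSL 𝕜 z).comp S
  have hker : LinearMap.ker (T : E →ₗ[𝕜] F) ≤ LinearMap.ker f := fun x hx => by
    have hTx : T x = 0 := hx
    have hSx : S x = 0 := by simpa [hTx] using h x
    simp [f, hSx]
  let φ : LinearMap.range (T : E →ₗ[𝕜] F) →ₗ[𝕜] 𝕜 :=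
    ((LinearMap.ker (T : E →ₗ[𝕜] F)).liftQ f hker).comp
      (T : E →ₗ[𝕜] F).quotKerEquivRange.symm.toLinearMap
  have hφ : ∀ x, φ ⟨(T : E →ₗ[𝕜] F) x, LinearMap.mem_range_self _ x⟩ = ⟪z, S x⟫_𝕜 := fun x => by
    simp only [φ, LinearMap.comp_apply, LinearEquiv.coe_coe]
    rw [LinearMap.quotKerEquivRange_symm_apply_image]
    rfl
  have hφ_bound : ∀ u, ‖φ u‖ ≤ (‖z‖ * c) * ‖u‖ := by
    rintro ⟨_, x, rfl⟩
    calc ‖φ ⟨_, x, rfl⟩‖ = ‖⟪z, S x⟫_𝕜‖ := congrArg norm (hφ x)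
      _ ≤ ‖z‖ * ‖S x‖ := norm_inner_le_norm z (S x)
      _ ≤ ‖z‖ * (c * ‖T x‖) := by gcongr; exact h x
      _ = ‖z‖ * c * ‖T x‖ := by ring
  obtain ⟨g, hg, -⟩ := exists_extension_norm_eq _ (φ.mkContinuous _ hφ_bound)
  refine ⟨(InnerProductSpace.toDual 𝕜 F).symm g, ext_inner_right 𝕜 fun x => ?_⟩
  have hgT : g (T x) = ⟪z, S x⟫_𝕜 := (hg ⟨_, x, rfl⟩).trans (hφ x)
  simp only [ContinuousLinearMap.coe_coe, ContinuousLinearMap.adjoint_inner_left,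
    InnerProductSpace.toDual_symm_apply, hgT]

end Douglas

lemma posSemidef_iff_nonneg {T : H →L[ℂ] H} (hT : IsSelfAdjoint T) : PosSemidef T ↔ 0 ≤ T := by
  rw [ContinuousLinearMap.nonneg_iff_isPositive, ContinuousLinearMap.isPositive_def']
  exact ⟨fun h => ⟨hT, h⟩, fun h => h.2⟩

lemma norm_cfcSqrt_apply_sq {T : H →L[ℂ] H} (hT : 0 ≤ T) (x : H) :
    ‖CFC.sqrt T x‖ ^ 2 = qf T x := by
  have hsa : IsSelfAdjoint (CFC.sqrt T) := .of_nonneg (CFC.sqrt_nonneg T)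
  conv_rhs => rw [qf, ← CFC.sqrt_mul_sqrt_self T, mul_apply_eq_comp,
    ← ContinuousLinearMap.adjoint_inner_right, ← ContinuousLinearMap.star_eq_adjoint, hsa.star_eq,
    inner_self_eq_norm_sq_to_K]
  norm_cast

theorem range_cfcSqrt_le_of_qf_le {S T : H →L[ℂ] H} (hS : 0 ≤ S) (hT : 0 ≤ T) (c : ℝ)
    (h : ∀ x, qf S x ≤ c * qf T x) :
    LinearMap.range ((CFC.sqrt S : H →L[ℂ] H) : H →ₗ[ℂ] H)
      ≤ LinearMap.range ((CFC.sqrt T : H →L[ℂ] H) : H →ₗ[ℂ] H) := by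
  have hsa : ∀ P : H →L[ℂ] H, (CFC.sqrt P).adjoint = CFC.sqrt P := fun P => by
    rw [← ContinuousLinearMap.star_eq_adjoint, (CFC.sqrt_nonneg P).isSelfAdjoint.star_eq]
  rw [← hsa S, ← hsa T]
  refine range_adjoint_le_of_norm_apply_le _ _ (√c) fun x => ?_
  have hTx : 0 ≤ qf T x := by rw [← norm_cfcSqrt_apply_sq hT]; positivity
  calc ‖CFC.sqrt S x‖ = √(qf S x) := by
        rw [← norm_cfcSqrt_apply_sq hS, Real.sqrt_sq (norm_nonneg _)]
    _ ≤ √(c * qf T x) := Real.sqrt_le_sqrt (h x)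
    _ = √c * ‖CFC.sqrt T x‖ := by
      rw [Real.sqrt_mul' c hTx, ← norm_cfcSqrt_apply_sq hT, Real.sqrt_sq (norm_nonneg _)]

/-- Write `f t = a + t b` through its values at `lm` and `lp`; the constant compares the
barycentric coordinates of `l` and `l'`. -/
lemma add_mul_le_max_mul_of_nonneg {a b lm lp l l' : ℝ} (hm : 0 ≤ a + lm * b)
    (hp : 0 ≤ a + lp * b) (hl' : l' ∈ Set.Ioo lm lp) :
    a + l * b ≤ max ((lp - l) / (lp - l')) ((l - lm) / (l' - lm)) * (a + l' * b) := by
  obtain ⟨hl'm, hl'p⟩ := hl'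
  set c := max ((lp - l) / (lp - l')) ((l - lm) / (l' - lm))
  have hcp : lp - l ≤ c * (lp - l') := (div_le_iff₀ (by linarith)).mp (le_max_left _ _)
  have hcm : l - lm ≤ c * (l' - lm) := (div_le_iff₀ (by linarith)).mp (le_max_right _ _)
  have key : (lp - lm) * (a + l * b) ≤ (lp - lm) * (c * (a + l' * b)) := by
    nlinarith [mul_le_mul_of_nonneg_right hcp hm, mul_le_mul_of_nonneg_right hcm hp]
  exact le_of_mul_le_mul_left key (by linarith)

omit [CompleteSpace H] in
lemma qf_add_smul_s10 (A B : H →L[ℂ] H) (μ : ℝ) (x : H) :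
    qf (A + (μ : ℂ) • B) x = qf A x + μ * qf B x := by
  simp [qf, Complex.mul_re]

lemma nonneg_of_mem_Ige {A B : H →L[ℂ] H} (hA : IsSelfAdjoint A) (hB : IsSelfAdjoint B) {μ : ℝ}
    (hμ : μ ∈ Ige A B) : 0 ≤ A + (μ : ℂ) • B :=
  (posSemidef_iff_nonneg <| hA.add <| .smul (r := (μ : ℂ)) (Complex.conj_ofReal μ) hB).mp hμ

theorem range_cfcSqrt_pencil_le {A B : H →L[ℂ] H} (hA : IsSelfAdjoint A) (hB : IsSelfAdjoint B)
    {lm lp l l' : ℝ} (hI : Set.Icc lm lp ⊆ Ige A B) (hl : l ∈ Set.Icc lm lp)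
    (hl' : l' ∈ Set.Ioo lm lp) :
    LinearMap.range ((CFC.sqrt (A + (l : ℂ) • B) : H →L[ℂ] H) : H →ₗ[ℂ] H)
      ≤ LinearMap.range ((CFC.sqrt (A + (l' : ℂ) • B) : H →L[ℂ] H) : H →ₗ[ℂ] H) := by
  have hlm : lm ∈ Ige A B := hI ⟨le_rfl, hl.1.trans hl.2⟩
  have hlp : lp ∈ Ige A B := hI ⟨hl.1.trans hl.2, le_rfl⟩
  refine range_cfcSqrt_le_of_qf_le (nonneg_of_mem_Ige hA hB (hI hl))
    (nonneg_of_mem_Ige hA hB (hI (Set.Ioo_subset_Icc_self hl')))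
    (max ((lp - l) / (lp - l')) ((l - lm) / (l' - lm))) fun x => ?_
  have hm := hlm x
  have hp := hlp x
  simp only [qf_add_smul_s10] at hm hp ⊢
  exact add_mul_le_max_mul_of_nonneg hm hp hl'

theorem stmt10_general (A B : H →L[ℂ] H) (hA : IsSelfAdjoint A) (hB : IsSelfAdjoint B)
    (lm lp : ℝ) (hI : Ige A B = Set.Icc lm lp) :
    ∀ l ∈ Set.Ioo lm lp, ∀ l' ∈ Set.Ioo lm lp,
      LinearMap.range ((CFC.sqrt (A + (l : ℂ) • B) : H →L[ℂ] H) : H →ₗ[ℂ] H)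
        = LinearMap.range ((CFC.sqrt (A + (l' : ℂ) • B) : H →L[ℂ] H) : H →ₗ[ℂ] H) := by
  intro l hl l' hl'
  exact le_antisymm (range_cfcSqrt_pencil_le hA hB hI.ge (Set.Ioo_subset_Icc_self hl) hl')
    (range_cfcSqrt_pencil_le hA hB hI.ge (Set.Ioo_subset_Icc_self hl') hl)

theorem stmt10 (A B : H →L[ℂ] H) (hA : IsSelfAdjoint A) (hB : IsSelfAdjoint B)
    (hBind : Indefinite B)
    (lm lp : ℝ) (hlt : lm < lp) (hI : Ige A B = Set.Icc lm lp) :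
    ∀ l ∈ Set.Ioo lm lp, ∀ l' ∈ Set.Ioo lm lp,
      LinearMap.range ((CFC.sqrt (A + (l : ℂ) • B) : H →L[ℂ] H) : H →ₗ[ℂ] H)
        = LinearMap.range ((CFC.sqrt (A + (l' : ℂ) • B) : H →L[ℂ] H) : H →ₗ[ℂ] H) :=
  stmt10_general A B hA hB lm lp hI
end
end
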